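/- (Stationary-distribution correctness, one-dimensional case of Corollary, part ii.) For every fixed θ, θ_s ∈ ℝ, the WOU conditional density converges pointwise to the stationary wrapped normal density as time tends to infinity: p_t(θ | θ_s) → f_WN(θ; μ, v∞) as t → ∞. -/

import Mathlib

open MeasureTheory Real

/-- Centered Gaussian density with variance `v` on `ℝ`. -/
noncomputable def gaussDens (v x : ℝ) : ℝ :=
  (Real.sqrt (2 * Real.pi * v))⁻¹ * Real.exp (-(x ^ 2) / (2 * v))

/-- Wrapped normal density `f_WN(θ; μ, v)`. -/
noncomputable def fWN (μ v θ : ℝ) : ℝ :=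
  ∑' k : ℤ, gaussDens v (θ - μ + 2 * (k : ℝ) * Real.pi)

/-- Winding-number weights `w_k(θ)` with stationary variance `v∞ = σ²/(2α)`. -/
noncomputable def wnWeight (α μ σ : ℝ) (k : ℤ) (θ : ℝ) : ℝ :=
  gaussDens (σ ^ 2 / (2 * α)) (θ - μ + 2 * (k : ℝ) * Real.pi) / fWN μ (σ ^ 2 / (2 * α)) θ

/-- Conditional mean `μ_t^m(θ_s) = μ + e^{−αt}(θ_s − μ + 2mπ)`. -/
noncomputable def wouMean (α μ : ℝ) (t : ℝ) (m : ℤ) (θs : ℝ) : ℝ :=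
  μ + Real.exp (-(α * t)) * (θs - μ + 2 * (m : ℝ) * Real.pi)

/-- Conditional variance `γ_t = σ²(1 − e^{−2αt})/(2α)`. -/
noncomputable def wouVar (α σ t : ℝ) : ℝ :=
  σ ^ 2 * (1 - Real.exp (-(2 * α * t))) / (2 * α)

/-- The WOU conditional density `p_t(θ | θ_s)`. -/
noncomputable def pWOU (α μ σ t θ θs : ℝ) : ℝ :=
  ∑' m : ℤ, wnWeight α μ σ m θs * fWN (wouMean α μ t m θs) (wouVar α σ t) θ

/-!
As `t → ∞` the means `μ_t^m(θ_s)` tend to `μ` and the variance `γ_t` tends to `v∞ > 0`. The series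
defining `f_WN` is dominated, locally uniformly in `(μ, v)` with `v > 0`, by a summable Gaussian
sequence in the winding number, so `f_WN` is continuous in its parameters and each summand of
`p_t(θ | θ_s)` converges. Since `f_WN` is `2π`-periodic in its mean, it is bounded uniformly for
variances in a compact subset of `(0, ∞)`; the weights `w_m(θ_s)` are summable with sum `1`, so
dominated convergence over `m` gives `p_t(θ | θ_s) → ∑ₘ w_m(θ_s) f_WN(θ; μ, v∞) = f_WN(θ; μ, v∞)`.
-/

open Filter Topology Set

lemma summable_exp_neg_mul_int_sq {c : ℝ} (hc : 0 < c) :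
    Summable fun k : ℤ => exp (-c * (k : ℝ) ^ 2) := by
  have h : Summable fun n : ℕ => exp (-c * (n : ℝ) ^ 2) :=
    Real.summable_exp_nat_mul_of_ge (neg_neg_of_pos hc) fun n => by
      exact_mod_cast Nat.le_self_pow two_ne_zero n
  exact Summable.of_nat_of_neg (by simpa using h) (by simpa using h)

lemma gaussDens_nonneg (v x : ℝ) : 0 ≤ gaussDens v x := by
  unfold gaussDens; positivity

lemma gaussDens_pos {v : ℝ} (hv : 0 < v) (x : ℝ) : 0 < gaussDens v x := by
  have : 0 < sqrt (2 * π * v) := sqrt_pos.mpr (by positivity)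
  unfold gaussDens; positivity

lemma continuousAt_gaussDens {v : ℝ} (hv : 0 < v) (x : ℝ) :
    ContinuousAt (fun p : ℝ × ℝ => gaussDens p.1 p.2) (v, x) := by
  unfold gaussDens
  fun_prop (disch := positivity)

noncomputable def wrappedGaussMajorant (a b R : ℝ) (k : ℤ) : ℝ :=
  (sqrt (2 * π * a))⁻¹ * exp (R ^ 2 / (2 * b)) * exp (-(π ^ 2 / b) * (k : ℝ) ^ 2)

lemma summable_wrappedGaussMajorant (a : ℝ) {b : ℝ} (hb : 0 < b) (R : ℝ) :
    Summable (wrappedGaussMajorant a b R) :=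
  (summable_exp_neg_mul_int_sq (by positivity)).mul_left _

lemma gaussDens_add_two_mul_pi_le {a b v x R : ℝ} (ha : 0 < a) (hv : v ∈ Icc a b)
    (hx : |x| ≤ R) (k : ℤ) :
    gaussDens v (x + 2 * k * π) ≤ wrappedGaussMajorant a b R k := by
  obtain ⟨hav, hvb⟩ := hv
  have hv : 0 < v := ha.trans_le hav
  have hb : 0 < b := hv.trans_le hvb
  have hsqrt : (sqrt (2 * π * v))⁻¹ ≤ (sqrt (2 * π * a))⁻¹ := by gcongr
  -- `(x + y)² ≥ y² / 2 - x²` with `y = 2kπ`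
  have hsq : 2 * π ^ 2 * (k : ℝ) ^ 2 - R ^ 2 ≤ (x + 2 * k * π) ^ 2 := by
    nlinarith [sq_nonneg (x + k * π), sq_abs x, abs_nonneg x]
  have hexp : -(x + 2 * k * π) ^ 2 / (2 * v) ≤ R ^ 2 / (2 * b) + -(π ^ 2 / b) * (k : ℝ) ^ 2 :=
    calc -(x + 2 * k * π) ^ 2 / (2 * v) ≤ -(x + 2 * k * π) ^ 2 / (2 * b) := by
          rw [neg_div, neg_div, neg_le_neg_iff]; gcongr
      _ ≤ -(2 * π ^ 2 * (k : ℝ) ^ 2 - R ^ 2) / (2 * b) := by gcongr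
      _ = R ^ 2 / (2 * b) + -(π ^ 2 / b) * (k : ℝ) ^ 2 := by field_simp; ring
  rw [gaussDens, wrappedGaussMajorant, mul_assoc _ (exp _), ← exp_add]
  exact mul_le_mul hsqrt (exp_le_exp.mpr hexp) (exp_pos _).le (by positivity)

lemma summable_gaussDens_add_two_mul_pi {v : ℝ} (hv : 0 < v) (x : ℝ) :
    Summable fun k : ℤ => gaussDens v (x + 2 * k * π) :=
  (summable_wrappedGaussMajorant v hv |x|).of_nonneg_of_le (fun _ => gaussDens_nonneg _ _)
    (gaussDens_add_two_mul_pi_le hv ⟨le_rfl, le_rfl⟩ le_rfl)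

lemma fWN_nonneg (μ v θ : ℝ) : 0 ≤ fWN μ v θ :=
  tsum_nonneg fun _ => gaussDens_nonneg _ _

lemma fWN_pos {v : ℝ} (hv : 0 < v) (μ θ : ℝ) : 0 < fWN μ v θ :=
  (summable_gaussDens_add_two_mul_pi hv (θ - μ)).tsum_pos (fun _ => gaussDens_nonneg _ _) 0
    (gaussDens_pos hv _)

lemma fWN_add_two_mul_pi (μ v θ : ℝ) (j : ℤ) : fWN (μ + 2 * j * π) v θ = fWN μ v θ := by
  unfold fWN
  refine Eq.trans ?_ ((Equiv.subRight j).tsum_eq fun k : ℤ => gaussDens v (θ - μ + 2 * k * π))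
  congr! 2 with k
  rw [Equiv.subRight_apply]
  push_cast
  congr 1
  ring

lemma exists_fWN_le {a b : ℝ} (ha : 0 < a) (hab : a ≤ b) :
    ∃ C, ∀ μ θ v, v ∈ Icc a b → fWN μ v θ ≤ C := by
  refine ⟨∑' k, wrappedGaussMajorant a b (2 * π) k, fun μ θ v hv => ?_⟩
  set j := toIcoDiv two_pi_pos 0 (θ - μ)
  have hx := toIcoMod_mem_Ico two_pi_pos 0 (θ - μ)
  have hxj : toIcoMod two_pi_pos 0 (θ - μ) = θ - (μ + 2 * j * π) := by
    rw [toIcoMod, zsmul_eq_mul]; ring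
  rw [← fWN_add_two_mul_pi μ v θ j, fWN, ← hxj]
  refine (summable_gaussDens_add_two_mul_pi (ha.trans_le hv.1) _).tsum_le_tsum
    (gaussDens_add_two_mul_pi_le ha hv ?_) (summable_wrappedGaussMajorant a (ha.trans_le hab) _)
  rw [zero_add] at hx
  exact (abs_of_nonneg hx.1).trans_le hx.2.le

lemma continuousAt_fWN {μ v : ℝ} (hv : 0 < v) (θ : ℝ) :
    ContinuousAt (fun p : ℝ × ℝ => fWN p.1 p.2 θ) (μ, v) := by
  refine tendsto_tsum_of_dominated_convergence
    (summable_wrappedGaussMajorant (v / 2) (b := 2 * v) (by positivity) (|θ - μ| + 1))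
    (fun k => ?_) ?_
  · exact (continuousAt_gaussDens hv (θ - μ + 2 * k * π)).comp_of_eq
      (f := fun p : ℝ × ℝ => (p.2, θ - p.1 + 2 * k * π)) (by fun_prop) rfl
  · have hvar : ∀ᶠ p : ℝ × ℝ in 𝓝 (μ, v), p.2 ∈ Icc (v / 2) (2 * v) :=
      continuous_snd.continuousAt.eventually (Icc_mem_nhds (by linarith) (by linarith))
    have hmean : ∀ᶠ p : ℝ × ℝ in 𝓝 (μ, v), p.1 ∈ Metric.ball μ 1 :=
      continuous_fst.continuousAt.eventually (Metric.ball_mem_nhds μ one_pos)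
    filter_upwards [hvar, hmean] with p hp hp1 k
    rw [norm_of_nonneg (gaussDens_nonneg _ _)]
    refine gaussDens_add_two_mul_pi_le (by positivity) hp ?_ k
    rw [Metric.mem_ball, dist_comm, dist_eq] at hp1
    linarith [abs_sub_le θ μ p.1]

lemma hasSum_wnWeight {α σ : ℝ} (hα : 0 < α) (hσ : σ ≠ 0) (μ θ : ℝ) :
    HasSum (fun k : ℤ => wnWeight α μ σ k θ) 1 := by
  have hV : 0 < σ ^ 2 / (2 * α) := by positivity
  rw [← div_self (fWN_pos hV μ θ).ne']
  exact (summable_gaussDens_add_two_mul_pi hV (θ - μ)).hasSum.div_const _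

lemma tendsto_wouMean {α : ℝ} (hα : 0 < α) (μ : ℝ) (m : ℤ) (θs : ℝ) :
    Tendsto (fun t => wouMean α μ t m θs) atTop (𝓝 μ) := by
  have hexp : Tendsto (fun t => exp (-(α * t))) atTop (𝓝 0) :=
    tendsto_exp_neg_atTop_nhds_zero.comp (tendsto_id.const_mul_atTop hα)
  simpa [wouMean] using tendsto_const_nhds.add (hexp.mul_const (θs - μ + 2 * m * π))

lemma tendsto_wouVar {α : ℝ} (hα : 0 < α) (σ : ℝ) :
    Tendsto (fun t => wouVar α σ t) atTop (𝓝 (σ ^ 2 / (2 * α))) := by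
  have hexp : Tendsto (fun t => exp (-(2 * α * t))) atTop (𝓝 0) :=
    tendsto_exp_neg_atTop_nhds_zero.comp (tendsto_id.const_mul_atTop (by positivity))
  simpa [wouVar] using
    ((tendsto_const_nhds (x := (1 : ℝ)).sub hexp).const_mul (σ ^ 2)).div_const (2 * α)

lemma tendsto_tsum_mul_of_bounded {α ι : Type*} {l : Filter α} {w : ι → ℝ} (hw : Summable w)
    {F : α → ι → ℝ} {g : ι → ℝ} {C : ℝ} (hF : ∀ i, Tendsto (F · i) l (𝓝 (g i)))
    (hC : ∀ᶠ a in l, ∀ i, ‖F a i‖ ≤ C) :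
    Tendsto (fun a => ∑' i, w i * F a i) l (𝓝 (∑' i, w i * g i)) := by
  refine tendsto_tsum_of_dominated_convergence (hw.norm.mul_right C)
    (fun i => (hF i).const_mul (w i)) ?_
  filter_upwards [hC] with a ha i
  rw [norm_mul]
  exact mul_le_mul_of_nonneg_left (ha i) (norm_nonneg _)

/-- Stationary-distribution correctness: the WOU conditional density converges
pointwise to the stationary wrapped normal density as `t → ∞`. -/
theorem pWOU_tendsto_stationary (α μ σ : ℝ) (hα : 0 < α) (hσ : 0 < σ)
    (θ θs : ℝ) :
    Filter.Tendsto (fun t : ℝ => pWOU α μ σ t θ θs) Filter.atTop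
      (nhds (fWN μ (σ ^ 2 / (2 * α)) θ)) := by
  set V := σ ^ 2 / (2 * α)
  have hV : 0 < V := by positivity
  obtain ⟨C, hC⟩ := exists_fWN_le (half_pos hV) (by linarith : V / 2 ≤ 2 * V)
  have hvar := tendsto_wouVar hα σ
  have hbounded : ∀ᶠ t in atTop, ∀ m : ℤ, ‖fWN (wouMean α μ t m θs) (wouVar α σ t) θ‖ ≤ C := by
    filter_upwards [hvar.eventually (Icc_mem_nhds (half_lt_self hV) (lt_two_mul_self hV))]
      with t ht m
    rw [norm_of_nonneg (fWN_nonneg _ _ _)]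
    exact hC _ _ _ ht
  have hlim := tendsto_tsum_mul_of_bounded (hasSum_wnWeight hα hσ.ne' μ θs).summable
    (fun m => (continuousAt_fWN hV θ).tendsto.comp ((tendsto_wouMean hα μ m θs).prodMk_nhds hvar))
    hbounded
  rwa [tsum_mul_right, (hasSum_wnWeight hα hσ.ne' μ θs).tsum_eq, one_mul] at hlim
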